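/- arXiv:1610.07163 — 2 statements merged into one kernel-verified Lean document; each statement's English description precedes it below -/
import Mathlib

section
/- Let N : (0, R] → [0, ∞) be a differentiable function satisfying the differential inequality N'(r) ≥ −(2/r) N(r)(1 + N(r)) for all r ∈ (0, R]. Then for all 0 < s ≤ r ≤ R: N(r) ≥ N(s) (s/r)² / (1 + N(s)(1 − (s/r)²)). -/
/-!
The differential inequality says exactly that `x ↦ x² · N(x)/(1 + N(x))` is nondecreasing:
its derivative is `x (2 N (1 + N) + x N') / (1 + N)²`. This is the integrated form of
`d/dx log (N/(1+N)) ≥ -2/x` that survives zeros of `N`. Comparing its values at `s ≤ r` and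
solving for `N(r)` gives the bound.
-/

open Set

lemma hasDerivAt_sq_mul_div_one_add {N : ℝ → ℝ} {N' x : ℝ} (hN : HasDerivAt N N' x)
    (hx : 1 + N x ≠ 0) :
    HasDerivAt (fun y => y ^ 2 * (N y / (1 + N y)))
      (x * (2 * N x * (1 + N x) + x * N') / (1 + N x) ^ 2) x := by
  refine ((hasDerivAt_pow 2 x).mul (hN.div (hN.const_add 1) hx)).congr_deriv ?_
  simp only [Pi.div_apply]
  field_simp
  ring

lemma monotoneOn_sq_mul_div_one_add {N N' : ℝ → ℝ} {a b : ℝ} (ha : 0 < a)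
    (hN : ∀ x ∈ Icc a b, 1 + N x ≠ 0) (hderiv : ∀ x ∈ Icc a b, HasDerivAt N (N' x) x)
    (hineq : ∀ x ∈ Icc a b, -(2 / x) * N x * (1 + N x) ≤ N' x) :
    MonotoneOn (fun x => x ^ 2 * (N x / (1 + N x))) (Icc a b) := by
  have hF x (hx : x ∈ Icc a b) := hasDerivAt_sq_mul_div_one_add (hderiv x hx) (hN x hx)
  refine monotoneOn_of_hasDerivWithinAt_nonneg (convex_Icc a b)
    (fun x hx => (hF x hx).continuousAt.continuousWithinAt)
    (fun x hx => (hF x (interior_subset hx)).hasDerivWithinAt) fun x hx => ?_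
  have hx := interior_subset hx
  have hx0 : 0 < x := ha.trans_le hx.1
  have hineq' : 0 ≤ 2 * N x * (1 + N x) + x * N' x := by
    have := mul_le_mul_of_nonneg_left (hineq x hx) hx0.le
    rw [show x * (-(2 / x) * N x * (1 + N x)) = -(2 * N x * (1 + N x)) by field_simp] at this
    linarith
  positivity

lemma le_of_sq_mul_div_one_add_le {s r a b : ℝ} (hs : 0 < s) (hsr : s ≤ r) (ha : 0 ≤ a)
    (hb : 0 ≤ b) (h : s ^ 2 * (a / (1 + a)) ≤ r ^ 2 * (b / (1 + b))) :
    a * (s / r) ^ 2 / (1 + a * (1 - (s / r) ^ 2)) ≤ b := by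
  have hr : 0 < r := hs.trans_le hsr
  set t := (s / r) ^ 2 with ht
  have ht1 : t ≤ 1 := pow_le_one₀ (by positivity) ((div_le_one hr).2 hsr)
  have hts : s ^ 2 = r ^ 2 * t := by rw [ht]; field_simp
  rw [hts, mul_assoc, mul_le_mul_iff_of_pos_left (by positivity), mul_div_assoc',
    div_le_div_iff₀ (by positivity) (by positivity)] at h
  rw [div_le_iff₀ (by nlinarith)]
  nlinarith

theorem stmt_5_general (R : ℝ) (N N' : ℝ → ℝ)
    (hN0 : ∀ r ∈ Set.Ioc (0:ℝ) R, 0 ≤ N r)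
    (hderiv : ∀ r ∈ Set.Ioc (0:ℝ) R, HasDerivAt N (N' r) r)
    (hineq : ∀ r ∈ Set.Ioc (0:ℝ) R, -(2 / r) * N r * (1 + N r) ≤ N' r) :
    ∀ s r : ℝ, 0 < s → s ≤ r → r ≤ R →
      N s * (s / r) ^ 2 / (1 + N s * (1 - (s / r) ^ 2)) ≤ N r := by
  intro s r hs hsr hrR
  have hsub : Icc s r ⊆ Ioc 0 R := fun x hx => ⟨hs.trans_le hx.1, hx.2.trans hrR⟩
  have hmono := monotoneOn_sq_mul_div_one_add hs
    (fun x hx => by linarith [hN0 x (hsub hx)]) (fun x hx => hderiv x (hsub hx))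
    (fun x hx => hineq x (hsub hx))
  exact le_of_sq_mul_div_one_add_le hs hsr (hN0 s (hsub (left_mem_Icc.2 hsr)))
    (hN0 r (hsub (right_mem_Icc.2 hsr)))
    (hmono (left_mem_Icc.2 hsr) (right_mem_Icc.2 hsr) hsr)

theorem stmt_5 (R : ℝ) (hR : 0 < R) (N N' : ℝ → ℝ)
    (hN0 : ∀ r ∈ Set.Ioc (0:ℝ) R, 0 ≤ N r)
    (hderiv : ∀ r ∈ Set.Ioc (0:ℝ) R, HasDerivAt N (N' r) r)
    (hineq : ∀ r ∈ Set.Ioc (0:ℝ) R, -(2 / r) * N r * (1 + N r) ≤ N' r) :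
    ∀ s r : ℝ, 0 < s → s ≤ r → r ≤ R →
      N s * (s / r) ^ 2 / (1 + N s * (1 - (s / r) ^ 2)) ≤ N r :=
  stmt_5_general R N N' hN0 hderiv hineq
end

section
/- Let K : (0, R] → (0, ∞) satisfy r K'(r) = N(r) K(r) with N ≥ 0 continuous, and suppose 0 < s < r ≤ R and N(τ) ≥ N(s)(s/τ)²/(1 + N(s)(1 − (s/τ)²)) for all τ ∈ [s, r]. Then K(s)² N(s) ≤ (1/(1 − (s/r)²)) (K(r)² − K(s)²). -/
/-! With `D t = 1 + N(s) (1 - (s/t)²)`, the lower bound on `N` says exactly that `K² / D` is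
nondecreasing on `[s, r]`, since `(K²)' = 2 N K² / t` and `D' = 2 N(s) s² / t³`. As `D s = 1`,
comparing the values at `s` and `r` gives `K(s)² (1 + N(s) (1 - (s/r)²)) ≤ K(r)²`. -/

open Set

theorem monotoneOn_div_of_hasDerivAt {f g f' g' : ℝ → ℝ} {a b : ℝ}
    (hf : ∀ t ∈ Icc a b, HasDerivAt f (f' t) t) (hg : ∀ t ∈ Icc a b, HasDerivAt g (g' t) t)
    (hg_pos : ∀ t ∈ Icc a b, 0 < g t) (hfg : ∀ t ∈ Icc a b, f t * g' t ≤ f' t * g t) :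
    MonotoneOn (fun t => f t / g t) (Icc a b) := by
  have hdiv : ∀ t ∈ Icc a b,
      HasDerivAt (fun t => f t / g t) ((f' t * g t - f t * g' t) / g t ^ 2) t :=
    fun t ht => (hf t ht).div (hg t ht) (hg_pos t ht).ne'
  refine monotoneOn_of_hasDerivWithinAt_nonneg (convex_Icc a b)
    (fun t ht => (hdiv t ht).continuousAt.continuousWithinAt)
    (fun t ht => (hdiv t (interior_subset ht)).hasDerivWithinAt) fun t ht => ?_
  have ht := interior_subset ht
  exact div_nonneg (sub_nonneg.2 (hfg t ht)) (sq_nonneg _)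

theorem hasDerivAt_one_add_mul_one_sub_div_sq (c s : ℝ) {t : ℝ} (ht : t ≠ 0) :
    HasDerivAt (fun t => 1 + c * (1 - (s / t) ^ 2)) (2 * c * s ^ 2 / t ^ 3) t := by
  simp only [div_eq_mul_inv]
  refine (((((hasDerivAt_inv ht).const_mul s).fun_pow 2).const_sub 1).const_mul c
    |>.const_add 1).congr_deriv ?_
  norm_num
  field_simp

theorem one_le_one_add_mul_one_sub_div_sq {c s t : ℝ} (hc : 0 ≤ c) (hs : 0 < s) (hst : s ≤ t) :
    1 ≤ 1 + c * (1 - (s / t) ^ 2) := by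
  have hq : (s / t) ^ 2 ≤ 1 :=
    pow_le_one₀ (div_nonneg hs.le (hs.trans_le hst).le) (div_le_one_of_le₀ hst (hs.trans_le hst).le)
  nlinarith

theorem sq_mul_div_cube_le_of_div_le {k n c s t d : ℝ} (ht : 0 < t) (hd : 0 < d)
    (hn : c * (s / t) ^ 2 / d ≤ n) :
    k ^ 2 * (2 * c * s ^ 2 / t ^ 3) ≤ 2 * n * k ^ 2 / t * d := by
  have hcd : c * (s / t) ^ 2 ≤ n * d := (div_le_iff₀ hd).1 hn
  calc k ^ 2 * (2 * c * s ^ 2 / t ^ 3) = 2 * k ^ 2 / t * (c * (s / t) ^ 2) := by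
        field_simp
    _ ≤ 2 * k ^ 2 / t * (n * d) := by gcongr
    _ = 2 * n * k ^ 2 / t * d := by ring

theorem stmt_13_general (R : ℝ) (K N : ℝ → ℝ) (s r : ℝ)
    (hs : 0 < s) (hsr : s < r) (hrR : r ≤ R)
    (hN0 : ∀ t ∈ Set.Ioc (0:ℝ) R, 0 ≤ N t)
    (hODE : ∀ t ∈ Set.Ioc (0:ℝ) R, HasDerivAt K (N t * K t / t) t)
    (hlow : ∀ t ∈ Set.Icc s r,
      N s * (s / t) ^ 2 / (1 + N s * (1 - (s / t) ^ 2)) ≤ N t) :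
    K s ^ 2 * N s ≤ (1 / (1 - (s / r) ^ 2)) * (K r ^ 2 - K s ^ 2) := by
  set D : ℝ → ℝ := fun t => 1 + N s * (1 - (s / t) ^ 2) with hD
  have hIoc : ∀ t ∈ Icc s r, t ∈ Ioc 0 R := fun t ht => ⟨hs.trans_le ht.1, ht.2.trans hrR⟩
  have hD_pos : ∀ t ∈ Icc s r, 0 < D t := fun t ht => one_pos.trans_le
    (one_le_one_add_mul_one_sub_div_sq (hN0 s (hIoc s ⟨le_rfl, hsr.le⟩)) hs ht.1)
  have hK2 : ∀ t ∈ Icc s r, HasDerivAt (fun t => K t ^ 2) (2 * N t * K t ^ 2 / t) t :=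
    fun t ht => ((hODE t (hIoc t ht)).fun_pow 2).congr_deriv (by field_simp; ring)
  have hmono : MonotoneOn (fun t => K t ^ 2 / D t) (Icc s r) :=
    monotoneOn_div_of_hasDerivAt hK2
      (fun t ht => hasDerivAt_one_add_mul_one_sub_div_sq (N s) s (hIoc t ht).1.ne') hD_pos
      fun t ht => sq_mul_div_cube_le_of_div_le (hIoc t ht).1 (hD_pos t ht) (hlow t ht)
  have hsr' : K s ^ 2 / D s ≤ K r ^ 2 / D r := hmono ⟨le_rfl, hsr.le⟩ ⟨hsr.le, le_rfl⟩ hsr.le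
  have hDs : D s = 1 := by simp [hD, div_self hs.ne']
  rw [hDs, div_one, le_div_iff₀ (hD_pos r ⟨hsr.le, le_rfl⟩)] at hsr'
  have hq : (s / r) ^ 2 < 1 := by
    have : s / r < 1 := (div_lt_one (hs.trans hsr)).2 hsr
    nlinarith [div_pos hs (hs.trans hsr)]
  rw [one_div, inv_mul_eq_div, le_div_iff₀ (sub_pos.2 hq)]
  linarith

theorem stmt_13 (R : ℝ) (K N : ℝ → ℝ) (s r : ℝ)
    (hs : 0 < s) (hsr : s < r) (hrR : r ≤ R)
    (hKpos : ∀ t ∈ Set.Ioc (0:ℝ) R, 0 < K t)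
    (hN0 : ∀ t ∈ Set.Ioc (0:ℝ) R, 0 ≤ N t)
    (hNcont : ContinuousOn N (Set.Ioc (0:ℝ) R))
    (hODE : ∀ t ∈ Set.Ioc (0:ℝ) R, HasDerivAt K (N t * K t / t) t)
    (hlow : ∀ t ∈ Set.Icc s r,
      N s * (s / t) ^ 2 / (1 + N s * (1 - (s / t) ^ 2)) ≤ N t) :
    K s ^ 2 * N s ≤ (1 / (1 - (s / r) ^ 2)) * (K r ^ 2 - K s ^ 2) :=
  stmt_13_general R K N s r hs hsr hrR hN0 hODE hlow
end
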